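/- For all positive n and k, ∑_{j=0}^{min(n,k)} j!(x+1)^{(j)} S(n+1,j+1) S(k+1,j+1) = (n+1)·∑_{j=0}^{min(n,k-1)} j!(x+1)^{(j)} S(n+1,j+1) S(k,j+1) + x·∑_{m=0}^{n-1} C(n,m) ∑_{j} j!(x+1)^{(j)} S(m+1,j+1) S(k,j+1) + ∑_{m=1}^{n-1} C(n,m-1) ∑_{j} j!(x+1)^{(j)} S(m+1,j+1) S(k,j+1), where all inner sums over j range up to the appropriate minimum. -/
import Mathlib


open Polynomial Finset

/-- Stirling numbers of the second kind. -/
def stirling2 : ℕ → ℕ → ℕ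
  | 0, 0 => 1
  | 0, _ + 1 => 0
  | _ + 1, 0 => 0
  | n + 1, k + 1 => stirling2 n k + (k + 1) * stirling2 n (k + 1)

/-- The rising factorial (x+1)(x+2)⋯(x+j) as a polynomial in ℤ[x]. -/
noncomputable def risingPoly (j : ℕ) : Polynomial ℤ :=
  ∏ i ∈ Finset.range j, (X + C (i + 1 : ℤ))

/-- The symmetrized poly-Bernoulli polynomial B̂ₙᵏ(x). -/
noncomputable def sB (n k : ℕ) : Polynomial ℤ :=
  ∑ j ∈ Finset.range (min n k + 1),
    C (j.factorial : ℤ) * risingPoly j *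
      C (stirling2 (n + 1) (j + 1) : ℤ) * C (stirling2 (k + 1) (j + 1) : ℤ)

lemma stirling2_succ (n k : ℕ) :
    stirling2 (n+1) (k+1) = stirling2 n k + (k + 1) * stirling2 n (k + 1) := rfl

lemma stirling2_zero_right (n : ℕ) : stirling2 (n+1) 0 = 0 := rfl

lemma stirling2_eq_zero : ∀ {n k : ℕ}, n < k → stirling2 n k = 0 := by
  intro n
  induction n with
  | zero => intro k h; obtain ⟨k, rfl⟩ := Nat.exists_eq_succ_of_ne_zero (by omega : k ≠ 0); rfl
  | succ n ih =>
    intro k h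
    obtain ⟨k, rfl⟩ := Nat.exists_eq_succ_of_ne_zero (by omega : k ≠ 0)
    rw [stirling2_succ, ih (by omega), ih (by omega)]
    ring

/-- key binomial identity: ∑ C(n,m) S(m,j) = S(n+1,j+1) -/
lemma sum_choose_stirling2 (n : ℕ) : ∀ j : ℕ,
    ∑ m ∈ range (n+1), n.choose m * stirling2 m j = stirling2 (n+1) (j+1) := by
  induction n with
  | zero =>
    intro j
    cases j with
    | zero => simp [stirling2]
    | succ j => simp [stirling2_succ]; cases j <;> rfl
  | succ n ih =>
    intro j
    have key : ∑ i ∈ range (n+1), n.choose (i+1) * stirling2 (i+1) j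
        + (n+1).choose 0 * stirling2 0 j = stirling2 (n+1) (j+1) := by
      have h := Finset.sum_range_succ' (fun m => n.choose m * stirling2 m j) (n+1)
      rw [Finset.sum_range_succ, Nat.choose_succ_self, zero_mul, add_zero, ih j] at h
      simpa using h.symm
    rw [Finset.sum_range_succ']
    have h1 : ∀ i, (n+1).choose (i+1) = n.choose i + n.choose (i+1) :=
      fun i => Nat.choose_succ_succ n i
    simp_rw [h1, add_mul, Finset.sum_add_distrib]
    rw [add_assoc, key]
    cases j with
    | zero =>
      simp [stirling2_zero_right, stirling2_succ]
    | succ j =>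
      simp_rw [stirling2_succ, mul_add, Finset.sum_add_distrib, ← mul_assoc,
        mul_comm (n.choose _) (j+1), mul_assoc, ← Finset.mul_sum, ih j, ih (j+1)]
      simp only [stirling2_succ]
      ring

/-- ∑ C(n,t) S(t+1,j) = S(n+1,j) + j S(n+1,j+1) -/
lemma sum_choose_stirling2' (n j : ℕ) :
    ∑ t ∈ range (n+1), n.choose t * stirling2 (t+1) j
      = stirling2 (n+1) j + j * stirling2 (n+1) (j+1) := by
  cases j with
  | zero => simp [stirling2_zero_right]
  | succ j =>
    simp_rw [stirling2_succ, mul_add, Finset.sum_add_distrib, ← mul_assoc,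
      mul_comm (n.choose _) (j+1), mul_assoc, ← Finset.mul_sum,
      sum_choose_stirling2 n j, sum_choose_stirling2 n (j+1)]
    simp only [stirling2_succ]
    ring

lemma M2 (a j : ℕ) :
    ∑ m ∈ range (a+1), (a+1).choose m * stirling2 (m+1) (j+1)
      = (j+1) * stirling2 (a+2) (j+2) := by
  have h := sum_choose_stirling2' (a+1) (j+1)
  rw [Finset.sum_range_succ, Nat.choose_self, one_mul] at h
  exact Nat.add_right_cancel (h.trans (add_comm _ _))

lemma M3aux (a j : ℕ) :
    ∑ t ∈ range (a+2), (a+1).choose t * stirling2 (t+2) (j+1)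
      = (stirling2 (a+2) j + j * stirling2 (a+2) (j+1))
        + (j+1) * (stirling2 (a+2) (j+1) + (j+1) * stirling2 (a+2) (j+2)) := by
  have expand : ∀ t, (a+1).choose t * stirling2 (t+2) (j+1)
      = (a+1).choose t * stirling2 (t+1) j
        + (j+1) * ((a+1).choose t * stirling2 (t+1) (j+1)) := fun t => by
    rw [stirling2_succ]; ring
  simp only [expand, Finset.sum_add_distrib, ← Finset.mul_sum,
    sum_choose_stirling2' (a+1) j, sum_choose_stirling2' (a+1) (j+1)]

lemma M3 (a j : ℕ) :
    ((∑ t ∈ range a, (a+1).choose t * stirling2 (t+2) (j+1) : ℕ) : ℤ)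
      = (j+1)^2 * stirling2 (a+2) (j+2) + (j+1) * stirling2 (a+2) (j+1)
        - (a+2 : ℤ) * stirling2 (a+2) (j+1) := by
  have h := M3aux a j
  rw [Finset.sum_range_succ, Finset.sum_range_succ, Nat.choose_succ_self_right,
    Nat.choose_self, one_mul] at h
  rw [show stirling2 (a+1+2) (j+1)
      = stirling2 (a+2) j + (j+1) * stirling2 (a+2) (j+1) from rfl] at h
  zify at h
  push_cast
  linear_combination h

lemma sum_extend (p q N : ℕ) (h : min p q + 1 ≤ N) :
    (∑ j ∈ range (min p q + 1), C (j.factorial : ℤ) * risingPoly j *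
        C (stirling2 (p+1) (j+1) : ℤ) * C (stirling2 (q+1) (j+1) : ℤ))
    = ∑ j ∈ range N, C (j.factorial : ℤ) * risingPoly j *
        C (stirling2 (p+1) (j+1) : ℤ) * C (stirling2 (q+1) (j+1) : ℤ) := by
  apply Finset.sum_subset (Finset.range_subset_range.mpr h)
  intro j _ hj
  rw [Finset.mem_range, not_lt] at hj
  have h' : p < j ∨ q < j := by omega
  rcases h' with h' | h'
  · rw [stirling2_eq_zero (by omega : p+1 < j+1)]; simp
  · rw [stirling2_eq_zero (by omega : q+1 < j+1)]; simp

lemma risingPoly_succ (j : ℕ) :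
    risingPoly (j+1) = risingPoly j * (X + C ((j:ℤ) + 1)) := by
  unfold risingPoly; rw [Finset.prod_range_succ]


noncomputable def Eterm (a : ℕ) (b : ℕ) (j : ℕ) : Polynomial ℤ :=
  C (j.factorial : ℤ) * risingPoly j * C (stirling2 (b+1) (j+1) : ℤ) *
    (C (((j:ℤ)+1) * (stirling2 (a+2) (j+1) : ℤ)) +
      (X + C ((j:ℤ)+1)) * C (((j:ℤ)+1) * (stirling2 (a+2) (j+2) : ℤ)))

lemma master (a b : ℕ) :
    (∑ j ∈ range (a+b+3), C (j.factorial : ℤ) * risingPoly j *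
        C (stirling2 (a+2) (j+1) : ℤ) * C (stirling2 (b+2) (j+1) : ℤ))
    = C ((a:ℤ)+2) * (∑ j ∈ range (a+b+3), C (j.factorial : ℤ) * risingPoly j *
          C (stirling2 (a+2) (j+1) : ℤ) * C (stirling2 (b+1) (j+1) : ℤ))
      + X * ∑ m ∈ range (a+1), C ((a+1).choose m : ℤ) *
          ∑ j ∈ range (a+b+3), C (j.factorial : ℤ) * risingPoly j *
            C (stirling2 (m+1) (j+1) : ℤ) * C (stirling2 (b+1) (j+1) : ℤ)
      + ∑ m ∈ Finset.Ico 1 (a+1), C ((a+1).choose (m-1) : ℤ) *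
          ∑ j ∈ range (a+b+3), C (j.factorial : ℤ) * risingPoly j *
            C (stirling2 (m+1) (j+1) : ℤ) * C (stirling2 (b+1) (j+1) : ℤ) := by
  -- Step 1: LHS = ∑ Eterm
  have hL : (∑ j ∈ range (a+b+3), C (j.factorial : ℤ) * risingPoly j *
        C (stirling2 (a+2) (j+1) : ℤ) * C (stirling2 (b+2) (j+1) : ℤ))
      = ∑ j ∈ range (a+b+3), Eterm a b j := by
    have expandL : ∀ j : ℕ, C (j.factorial:ℤ) * risingPoly j *
          C (stirling2 (a+2) (j+1):ℤ) * C (stirling2 (b+2) (j+1):ℤ)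
        = C (j.factorial:ℤ) * risingPoly j *
            C (stirling2 (a+2) (j+1):ℤ) * C (stirling2 (b+1) j :ℤ)
          + C (j.factorial:ℤ) * risingPoly j * C (stirling2 (b+1) (j+1):ℤ) *
              C (((j:ℤ)+1) * (stirling2 (a+2) (j+1):ℤ)) := fun j => by
      rw [show stirling2 (b+2) (j+1)
          = stirling2 (b+1) j + (j+1) * stirling2 (b+1) (j+1) from rfl]
      push_cast
      simp only [map_add, map_mul]
      ring
    simp only [expandL, Finset.sum_add_distrib]
    have claimA : (∑ j ∈ range (a+b+3), C (j.factorial:ℤ) * risingPoly j *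
          C (stirling2 (a+2) (j+1):ℤ) * C (stirling2 (b+1) j :ℤ))
        = ∑ j ∈ range (a+b+3), C (j.factorial:ℤ) * risingPoly j *
            C (stirling2 (b+1) (j+1):ℤ) *
            ((X + C ((j:ℤ)+1)) * C (((j:ℤ)+1) * (stirling2 (a+2) (j+2):ℤ))) := by
      conv_lhs => rw [Finset.sum_range_succ' (fun j => C (j.factorial:ℤ) * risingPoly j *
          C (stirling2 (a+2) (j+1):ℤ) * C (stirling2 (b+1) j :ℤ)) (a+b+2)]
      conv_rhs => rw [Finset.sum_range_succ (fun j => C (j.factorial:ℤ) * risingPoly j *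
          C (stirling2 (b+1) (j+1):ℤ) *
          ((X + C ((j:ℤ)+1)) * C (((j:ℤ)+1) * (stirling2 (a+2) (j+2):ℤ)))) (a+b+2)]
      rw [show stirling2 (b+1) 0 = 0 from rfl,
        stirling2_eq_zero (show a+2 < a+b+2+2 by omega)]
      push_cast
      simp only [map_zero, mul_zero, zero_mul, add_zero]
      apply Finset.sum_congr rfl
      intro i _
      rw [risingPoly_succ, Nat.factorial_succ]
      push_cast
      simp only [map_mul, map_add]
      ring
    rw [claimA, ← Finset.sum_add_distrib]
    apply Finset.sum_congr rfl
    intro j _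
    unfold Eterm
    simp only [map_mul, map_add]
    ring
  -- Step 2: inner evaluation for the X-term
  have inner2 : ∀ j : ℕ, (∑ m ∈ range (a+1), C ((a+1).choose m : ℤ) *
        (C (j.factorial : ℤ) * risingPoly j *
          C (stirling2 (m+1) (j+1) : ℤ) * C (stirling2 (b+1) (j+1) : ℤ)))
      = C (j.factorial : ℤ) * risingPoly j * C (stirling2 (b+1) (j+1) : ℤ) *
          C (((j:ℤ)+1) * (stirling2 (a+2) (j+2) : ℤ)) := by
    intro j
    have hz : (((j:ℤ)+1) * (stirling2 (a+2) (j+2) : ℤ))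
        = ∑ m ∈ range (a+1), ((a+1).choose m : ℤ) * (stirling2 (m+1) (j+1) : ℤ) := by
      exact_mod_cast (M2 a j).symm
    rw [hz, map_sum, Finset.mul_sum]
    apply Finset.sum_congr rfl
    intro m _
    rw [map_mul]
    ring
  -- Step 3: inner evaluation for the third term
  have inner3 : ∀ j : ℕ, (∑ m ∈ Finset.Ico 1 (a+1), C ((a+1).choose (m-1) : ℤ) *
        (C (j.factorial : ℤ) * risingPoly j *
          C (stirling2 (m+1) (j+1) : ℤ) * C (stirling2 (b+1) (j+1) : ℤ)))
      = C (j.factorial : ℤ) * risingPoly j * C (stirling2 (b+1) (j+1) : ℤ) *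
          C (((j:ℤ)+1)^2 * (stirling2 (a+2) (j+2) : ℤ)
            + ((j:ℤ)+1) * (stirling2 (a+2) (j+1) : ℤ)
            - ((a:ℤ)+2) * (stirling2 (a+2) (j+1) : ℤ)) := by
    intro j
    rw [Finset.sum_Ico_eq_sum_range]
    simp only [Nat.add_sub_cancel, Nat.add_sub_cancel_left,
      show ∀ i : ℕ, 1 + i + 1 = i + 2 from fun i => by omega]
    have hz : (((j:ℤ)+1)^2 * (stirling2 (a+2) (j+2) : ℤ)
          + ((j:ℤ)+1) * (stirling2 (a+2) (j+1) : ℤ)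
          - ((a:ℤ)+2) * (stirling2 (a+2) (j+1) : ℤ))
        = ∑ i ∈ range a, ((a+1).choose i : ℤ) * (stirling2 (i+2) (j+1) : ℤ) := by
      have h3 := M3 a j
      rw [Nat.cast_sum] at h3
      push_cast at h3
      linear_combination -h3
    rw [hz, map_sum, Finset.mul_sum]
    apply Finset.sum_congr rfl
    intro i _
    rw [map_mul]
    ring
  rw [hL]
  have swap2 : (∑ m ∈ range (a+1), C ((a+1).choose m : ℤ) *
        ∑ j ∈ range (a+b+3), C (j.factorial : ℤ) * risingPoly j *
          C (stirling2 (m+1) (j+1) : ℤ) * C (stirling2 (b+1) (j+1) : ℤ))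
      = ∑ j ∈ range (a+b+3), ∑ m ∈ range (a+1), C ((a+1).choose m : ℤ) *
          (C (j.factorial : ℤ) * risingPoly j *
            C (stirling2 (m+1) (j+1) : ℤ) * C (stirling2 (b+1) (j+1) : ℤ)) := by
    simp_rw [Finset.mul_sum]; exact Finset.sum_comm
  have swap3 : (∑ m ∈ Finset.Ico 1 (a+1), C ((a+1).choose (m-1) : ℤ) *
        ∑ j ∈ range (a+b+3), C (j.factorial : ℤ) * risingPoly j *
          C (stirling2 (m+1) (j+1) : ℤ) * C (stirling2 (b+1) (j+1) : ℤ))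
      = ∑ j ∈ range (a+b+3), ∑ m ∈ Finset.Ico 1 (a+1), C ((a+1).choose (m-1) : ℤ) *
          (C (j.factorial : ℤ) * risingPoly j *
            C (stirling2 (m+1) (j+1) : ℤ) * C (stirling2 (b+1) (j+1) : ℤ)) := by
    simp_rw [Finset.mul_sum]; exact Finset.sum_comm
  rw [swap2, swap3, Finset.mul_sum, Finset.mul_sum,
    ← Finset.sum_add_distrib, ← Finset.sum_add_distrib]
  apply Finset.sum_congr rfl
  intro j _
  rw [inner2 j, inner3 j]
  unfold Eterm
  simp only [map_mul, map_add, map_sub, map_pow, map_one, map_ofNat]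
  ring

theorem sB_recurrence_explicit (n k : ℕ) (hn : 0 < n) (hk : 0 < k) :
    (∑ j ∈ Finset.range (min n k + 1),
        C (j.factorial : ℤ) * risingPoly j *
          C (stirling2 (n + 1) (j + 1) : ℤ) * C (stirling2 (k + 1) (j + 1) : ℤ))
    = (n + 1 : ℤ) •
        (∑ j ∈ Finset.range (min n (k - 1) + 1),
          C (j.factorial : ℤ) * risingPoly j *
            C (stirling2 (n + 1) (j + 1) : ℤ) * C (stirling2 k (j + 1) : ℤ))
      + X * ∑ m ∈ Finset.range n, C (n.choose m : ℤ) *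
          ∑ j ∈ Finset.range (min m (k - 1) + 1),
            C (j.factorial : ℤ) * risingPoly j *
              C (stirling2 (m + 1) (j + 1) : ℤ) * C (stirling2 k (j + 1) : ℤ)
      + ∑ m ∈ Finset.Ico 1 n, C (n.choose (m - 1) : ℤ) *
          ∑ j ∈ Finset.range (min m (k - 1) + 1),
            C (j.factorial : ℤ) * risingPoly j *
              C (stirling2 (m + 1) (j + 1) : ℤ) * C (stirling2 k (j + 1) : ℤ) := by
  obtain ⟨a, rfl⟩ : ∃ a, n = a + 1 := ⟨n - 1, by omega⟩
  obtain ⟨b, rfl⟩ : ∃ b, k = b + 1 := ⟨k - 1, by omega⟩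
  clear hn hk
  simp only [Nat.add_sub_cancel]
  rw [sum_extend (a+1) (b+1) (a+b+3) (by omega),
    sum_extend (a+1) b (a+b+3) (by omega)]
  have e2 : ∀ m ∈ range (a+1), (C ((a+1).choose m : ℤ) *
        ∑ j ∈ Finset.range (min m b + 1), C (j.factorial : ℤ) * risingPoly j *
          C (stirling2 (m + 1) (j + 1) : ℤ) * C (stirling2 (b+1) (j + 1) : ℤ))
      = C ((a+1).choose m : ℤ) *
        ∑ j ∈ Finset.range (a+b+3), C (j.factorial : ℤ) * risingPoly j *
          C (stirling2 (m + 1) (j + 1) : ℤ) * C (stirling2 (b+1) (j + 1) : ℤ) := by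
    intro m hm
    rw [Finset.mem_range] at hm
    rw [sum_extend m b (a+b+3) (by omega)]
  have e3 : ∀ m ∈ Finset.Ico 1 (a+1), (C ((a+1).choose (m-1) : ℤ) *
        ∑ j ∈ Finset.range (min m b + 1), C (j.factorial : ℤ) * risingPoly j *
          C (stirling2 (m + 1) (j + 1) : ℤ) * C (stirling2 (b+1) (j + 1) : ℤ))
      = C ((a+1).choose (m-1) : ℤ) *
        ∑ j ∈ Finset.range (a+b+3), C (j.factorial : ℤ) * risingPoly j *
          C (stirling2 (m + 1) (j + 1) : ℤ) * C (stirling2 (b+1) (j + 1) : ℤ) := by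
    intro m hm
    rw [Finset.mem_Ico] at hm
    rw [sum_extend m b (a+b+3) (by omega)]
  rw [Finset.sum_congr rfl e2, Finset.sum_congr rfl e3, Polynomial.smul_eq_C_mul,
    show ((a+1:ℕ):ℤ) + 1 = (a:ℤ)+2 by push_cast; ring]
  exact master a b
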